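/- With ℰ_t = (ℰ−1) − t(ℰ'−1) for i.i.d. standard exponentials ℰ, ℰ', and μ_t = E|ℰ_t| = (2/e)e^t/(1+t), the function t ↦ ‖ℰ_t/μ_t‖_2 is strictly increasing on [0,1]; explicitly, ‖ℰ_t/μ_t‖_2² = (1/4)e^{2(1-t)}(1+t²)(1+t)². -/

import Mathlib

/-!
Centering and independence give `‖ℰ_t‖₂² = Var ℰ + t² Var ℰ' = 1 + t²`, so
`‖ℰ_t / μ_t‖₂² = (1 + t²) / μ_t²`, which is the stated closed form. Its derivative
`½ e^{2(1-t)} t² (1 - t)(1 + t)` is positive on `(0, 1)`.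
-/

open MeasureTheory ProbabilityTheory Real Set

/-- Density of a standard exponential random variable. -/
noncomputable def expPDF : ℝ → ℝ := fun x => if 0 < x then Real.exp (-x) else 0

/-- `X` has density `f` with respect to Lebesgue measure. -/
def HasDensity {Ω : Type*} [MeasurableSpace Ω] (P : Measure Ω) (X : Ω → ℝ) (f : ℝ → ℝ) : Prop :=
  Measurable X ∧ Measure.map X P = volume.withDensity (fun x => ENNReal.ofReal (f x))

section Density

variable {Ω : Type*} [MeasurableSpace Ω] {P : Measure Ω} {X : Ω → ℝ} {f g : ℝ → ℝ}

theorem HasDensity.integrable_comp_iff (hX : HasDensity P X f) (hf : Measurable f) (hf0 : 0 ≤ f)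
    (hg : Measurable g) :
    Integrable (fun ω => g (X ω)) P ↔ Integrable (fun x => f x * g x) := by
  change Integrable (g ∘ X) P ↔ _
  rw [← integrable_map_measure hg.aestronglyMeasurable hX.1.aemeasurable, hX.2,
    integrable_withDensity_iff_integrable_smul' hf.ennreal_ofReal
      (ae_of_all _ fun _ => ENNReal.ofReal_lt_top)]
  simp only [ENNReal.toReal_ofReal (hf0 _), smul_eq_mul]

theorem HasDensity.integral_comp (hX : HasDensity P X f) (hf : Measurable f) (hf0 : 0 ≤ f)
    (hg : Measurable g) :
    ∫ ω, g (X ω) ∂P = ∫ x, f x * g x := by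
  rw [← integral_map hX.1.aemeasurable hg.aestronglyMeasurable, hX.2,
    integral_withDensity_eq_integral_toReal_smul hf.ennreal_ofReal
      (ae_of_all _ fun _ => ENNReal.ofReal_lt_top)]
  simp only [ENNReal.toReal_ofReal (hf0 _), smul_eq_mul]

end Density

section Exponential

variable {Ω : Type*} [MeasurableSpace Ω] {P : Measure Ω} {X : Ω → ℝ}

theorem measurable_expPDF : Measurable expPDF :=
  Measurable.ite measurableSet_Ioi (by fun_prop) measurable_const

theorem expPDF_nonneg : 0 ≤ expPDF := fun x => by
  unfold expPDF; split <;> positivity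

theorem expPDF_mul_eq_indicator (g : ℝ → ℝ) :
    (fun x => expPDF x * g x) = (Ioi 0).indicator (fun x => exp (-x) * g x) := by
  ext x
  by_cases hx : 0 < x <;> simp [expPDF, hx]

theorem integrableOn_exp_neg_mul_pow (n : ℕ) :
    IntegrableOn (fun x => exp (-x) * x ^ n) (Ioi 0) := by
  refine (GammaIntegral_convergent (s := n + 1) (by positivity)).congr_fun (fun x _ => ?_)
    measurableSet_Ioi
  simp only [add_sub_cancel_right, rpow_natCast]

theorem integral_exp_neg_mul_pow (n : ℕ) :
    ∫ x in Ioi 0, exp (-x) * x ^ n = n.factorial := by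
  rw [← Gamma_nat_eq_factorial, Gamma_eq_integral (by positivity)]
  refine setIntegral_congr_fun measurableSet_Ioi fun x _ => ?_
  rw [add_sub_cancel_right, rpow_natCast]

theorem HasDensity.integrable_pow_of_expPDF (hX : HasDensity P X expPDF) (n : ℕ) :
    Integrable (fun ω => X ω ^ n) P := by
  rw [hX.integrable_comp_iff measurable_expPDF expPDF_nonneg (measurable_id'.pow_const n),
    expPDF_mul_eq_indicator, integrable_indicator_iff measurableSet_Ioi]
  exact integrableOn_exp_neg_mul_pow n

theorem HasDensity.integral_pow_of_expPDF (hX : HasDensity P X expPDF) (n : ℕ) :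
    ∫ ω, X ω ^ n ∂P = n.factorial := by
  rw [hX.integral_comp measurable_expPDF expPDF_nonneg (measurable_id'.pow_const n),
    expPDF_mul_eq_indicator, integral_indicator measurableSet_Ioi, integral_exp_neg_mul_pow]

theorem HasDensity.integrable_of_expPDF (hX : HasDensity P X expPDF) : Integrable X P := by
  simpa using hX.integrable_pow_of_expPDF 1

theorem HasDensity.integral_of_expPDF (hX : HasDensity P X expPDF) : ∫ ω, X ω ∂P = 1 := by
  simpa using hX.integral_pow_of_expPDF 1

variable [IsProbabilityMeasure P]

theorem HasDensity.integrable_sub_one_of_expPDF (hX : HasDensity P X expPDF) :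
    Integrable (fun ω => X ω - 1) P :=
  hX.integrable_of_expPDF.sub (integrable_const 1)

theorem HasDensity.integral_sub_one_of_expPDF (hX : HasDensity P X expPDF) :
    ∫ ω, (X ω - 1) ∂P = 0 := by
  rw [integral_sub hX.integrable_of_expPDF (integrable_const 1), hX.integral_of_expPDF]
  simp

theorem HasDensity.integrable_sub_one_sq_of_expPDF (hX : HasDensity P X expPDF) :
    Integrable (fun ω => (X ω - 1) ^ 2) P := by
  simp_rw [sub_sq, one_pow, mul_one]
  exact ((hX.integrable_pow_of_expPDF 2).sub (hX.integrable_of_expPDF.const_mul 2)).add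
    (integrable_const 1)

theorem HasDensity.integral_sub_one_sq_of_expPDF (hX : HasDensity P X expPDF) :
    ∫ ω, (X ω - 1) ^ 2 ∂P = 1 := by
  have hX2 : Integrable (fun ω => X ω ^ 2 - 2 * X ω) P :=
    (hX.integrable_pow_of_expPDF 2).sub (hX.integrable_of_expPDF.const_mul 2)
  simp_rw [sub_sq, one_pow, mul_one]
  rw [integral_add hX2 (integrable_const 1), integral_sub (hX.integrable_pow_of_expPDF 2)
    (hX.integrable_of_expPDF.const_mul 2), integral_const_mul, hX.integral_pow_of_expPDF,
    hX.integral_of_expPDF]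
  norm_num

end Exponential

theorem ProbabilityTheory.IndepFun.integral_sub_mul_sq {Ω : Type*} [MeasurableSpace Ω]
    {P : Measure Ω} [IsFiniteMeasure P] {X Y : Ω → ℝ} (hXY : IndepFun X Y P)
    (hX : Integrable X P) (hY : Integrable Y P) (hX2 : Integrable (fun ω => X ω ^ 2) P)
    (hY2 : Integrable (fun ω => Y ω ^ 2) P) (hX0 : ∫ ω, X ω ∂P = 0) (t : ℝ) :
    ∫ ω, (X ω - t * Y ω) ^ 2 ∂P = ∫ ω, X ω ^ 2 ∂P + t ^ 2 * ∫ ω, Y ω ^ 2 ∂P := by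
  have hXY0 : ∫ ω, X ω * Y ω ∂P = 0 := by
    rw [hXY.integral_fun_mul_eq_mul_integral hX.aestronglyMeasurable hY.aestronglyMeasurable,
      hX0, zero_mul]
  have hXYint : Integrable (fun ω => 2 * t * (X ω * Y ω)) P :=
    (hXY.integrable_mul hX hY).const_mul _
  have hsub : Integrable (fun ω => X ω ^ 2 - 2 * t * (X ω * Y ω)) P := hX2.sub hXYint
  have hexpand : (fun ω => (X ω - t * Y ω) ^ 2)
      = fun ω => (X ω ^ 2 - 2 * t * (X ω * Y ω)) + t ^ 2 * Y ω ^ 2 := by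
    ext ω; ring
  rw [hexpand, integral_add hsub (hY2.const_mul _), integral_sub hX2 hXYint,
    integral_const_mul, integral_const_mul, hXY0]
  ring

theorem one_add_sq_div_sq_eq {t : ℝ} (ht : 1 + t ≠ 0) :
    (1 + t ^ 2) / ((2 / exp 1) * exp t / (1 + t)) ^ 2
      = (1 / 4) * exp (2 * (1 - t)) * (1 + t ^ 2) * (1 + t) ^ 2 := by
  rw [show 2 * (1 - t) = 1 + 1 - t - t by ring, exp_sub, exp_sub, exp_add]
  field_simp
  ring

theorem hasDerivAt_exp_mul_one_add_sq_mul_one_add_sq (t : ℝ) :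
    HasDerivAt (fun t => (1 / 4) * exp (2 * (1 - t)) * (1 + t ^ 2) * (1 + t) ^ 2)
      ((1 / 2) * exp (2 * (1 - t)) * t ^ 2 * (1 - t) * (1 + t)) t := by
  have hexp : HasDerivAt (fun t => exp (2 * (1 - t))) (exp (2 * (1 - t)) * (-2)) t := by
    simpa using (((hasDerivAt_id t).const_sub 1).const_mul 2).exp
  have hsq : HasDerivAt (fun t : ℝ => 1 + t ^ 2) (2 * t) t := by
    simpa using (hasDerivAt_pow 2 t).const_add 1
  have hsq' : HasDerivAt (fun t : ℝ => (1 + t) ^ 2) (2 * (1 + t)) t := by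
    simpa using ((hasDerivAt_id t).const_add 1).fun_pow 2
  exact (((hexp.const_mul (1 / 4)).fun_mul hsq).fun_mul hsq').congr_deriv (by ring)

theorem strictMonoOn_exp_mul_one_add_sq_mul_one_add_sq :
    StrictMonoOn (fun t => (1 / 4) * exp (2 * (1 - t)) * (1 + t ^ 2) * (1 + t) ^ 2)
      (Icc 0 1) := by
  refine strictMonoOn_of_deriv_pos (convex_Icc 0 1) (by fun_prop) fun t ht => ?_
  rw [interior_Icc] at ht
  rw [(hasDerivAt_exp_mul_one_add_sq_mul_one_add_sq t).deriv]
  have h1 : 0 < 1 - t := by linarith [ht.2]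
  have h2 : 0 < 1 + t := by linarith [ht.1]
  have h0 : 0 < t ^ 2 := pow_pos ht.1 2
  positivity

theorem stmt_11 {Ω : Type} [MeasurableSpace Ω] (P : Measure Ω) [IsProbabilityMeasure P]
    (E E' : Ω → ℝ) (hE : HasDensity P E expPDF) (hE' : HasDensity P E' expPDF)
    (hind : IndepFun E E' P)
    (μ : ℝ → ℝ) (hμ : ∀ t, μ t = (2 / Real.exp 1) * Real.exp t / (1 + t)) :
    StrictMonoOn
      (fun t => (∫ ω, (((E ω - 1) - t * (E' ω - 1)) / μ t) ^ 2 ∂P) ^ ((1 : ℝ) / 2))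
      (Set.Icc 0 1) ∧
    ∀ t ∈ Set.Icc (0 : ℝ) 1,
      (∫ ω, (((E ω - 1) - t * (E' ω - 1)) / μ t) ^ 2 ∂P) =
        (1 / 4) * Real.exp (2 * (1 - t)) * (1 + t ^ 2) * (1 + t) ^ 2 := by
  have hcentered : IndepFun (fun ω => E ω - 1) (fun ω => E' ω - 1) P :=
    hind.comp (measurable_id.sub_const 1) (measurable_id.sub_const 1)
  have hnormSq : ∀ t, ∫ ω, ((E ω - 1) - t * (E' ω - 1)) ^ 2 ∂P = 1 + t ^ 2 := fun t => by
    rw [hcentered.integral_sub_mul_sq hE.integrable_sub_one_of_expPDF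
      hE'.integrable_sub_one_of_expPDF hE.integrable_sub_one_sq_of_expPDF
      hE'.integrable_sub_one_sq_of_expPDF hE.integral_sub_one_of_expPDF,
      hE.integral_sub_one_sq_of_expPDF, hE'.integral_sub_one_sq_of_expPDF, mul_one]
  have hval : ∀ t ∈ Icc (0 : ℝ) 1, ∫ ω, (((E ω - 1) - t * (E' ω - 1)) / μ t) ^ 2 ∂P
      = (1 / 4) * exp (2 * (1 - t)) * (1 + t ^ 2) * (1 + t) ^ 2 := fun t ht => by
    simp_rw [div_pow]
    rw [integral_div, hnormSq, hμ, one_add_sq_div_sq_eq (by linarith [ht.1])]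
  refine ⟨fun x hx y hy hxy => ?_, hval⟩
  simp only [hval x hx, hval y hy]
  exact rpow_lt_rpow (by positivity) (strictMonoOn_exp_mul_one_add_sq_mul_one_add_sq hx hy hxy)
    (by norm_num)
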